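/- Let reg be a regular expression over a finite base alphabet Σ̃ with DFA A¹ = (Q¹, q¹_init, F¹, Σ̃, δ¹), and let M(callseq reg) be the compiled VPA. Let n = a_1…a_l be a rooted well-matched nested word and let (q_0 = q_beg, θ_0 = ⊥), (q_1, θ_1), …, (q_l, θ_l) be the run of M(callseq reg) on n. Then for every 1 ≤ i ≤ l−1, the state q_i equals the state reached by A¹, started in q¹_init, after reading the word of base symbols of the call positions among a_1, …, a_i in order. -/
import Mathlib


open Classical

namespace SafeTree

/-- Call and return symbols over a base alphabet `A`:
`Sym.call a` is `⟨a` and `Sym.ret a` is `a⟩`. -/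
inductive Sym (A : Type) : Type
  | call : A → Sym A
  | ret : A → Sym A
  deriving DecidableEq

/-- Well-matched words over call/return symbols: every call is matched with a
later return and matched pairs do not cross (the Dyck condition). -/
inductive WellMatched {A : Type} : List (Sym A) → Prop
  | nil : WellMatched []
  | wrap {w : List (Sym A)} (a b : A) :
      WellMatched w → WellMatched (Sym.call a :: (w ++ [Sym.ret b]))
  | append {w₁ w₂ : List (Sym A)} :
      WellMatched w₁ → WellMatched w₂ → WellMatched (w₁ ++ w₂)

/-- A rooted well-matched nested word: a well-matched word whose first and last
positions are matched with each other. -/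
def Rooted {A : Type} (n : List (Sym A)) : Prop :=
  ∃ (a b : A) (w : List (Sym A)), WellMatched w ∧ n = Sym.call a :: (w ++ [Sym.ret b])

/-- Position `i` (0-indexed) of `n` holds a call symbol. -/
def IsCallAt {A : Type} (n : List (Sym A)) (i : ℕ) : Prop :=
  ∃ a, n[i]? = some (Sym.call a)

/-- Position `j` (0-indexed) of `n` holds a return symbol. -/
def IsRetAt {A : Type} (n : List (Sym A)) (j : ℕ) : Prop :=
  ∃ a, n[j]? = some (Sym.ret a)

/-- The matching relation of a nested word, on 0-indexed positions: call
position `i` is matched with return position `j`. -/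
def MatchedAt {A : Type} (n : List (Sym A)) (i j : ℕ) : Prop :=
  i < j ∧ j < n.length ∧ IsCallAt n i ∧ IsRetAt n j ∧
    WellMatched ((n.drop (i+1)).take (j - (i+1)))

/-- The word of base symbols of the call positions, read left to right. -/
def callsOf {A : Type} : List (Sym A) → List A
  | [] => []
  | Sym.call a :: w => a :: callsOf w
  | Sym.ret _ :: w => callsOf w

/-- A deterministic visibly pushdown automaton over base alphabet `A`
(call symbols `⟨a` and return symbols `a⟩` for `a : A`), states `Q`,
and stack alphabet `Γ` with distinguished bottom symbol `bot`. -/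
structure VPA (A : Type) (Q : Type) (Γ : Type) where
  qinit : Q
  final : Set Q
  bot : Γ
  callStep : Q → A → Q × Γ
  retStep : Q → Γ → A → Q

namespace VPA

variable {A Q Γ : Type}

/-- One step of a VPA on a call or a return symbol.  The stack is represented
as a list with its top at the head; the empty list represents the stack
containing only the bottom symbol `⊥`, which is never pushed nor removed. -/
def step (M : VPA A Q Γ) : Q × List Γ → Sym A → Q × List Γ
  | (q, θ), Sym.call a => ((M.callStep q a).1, (M.callStep q a).2 :: θ)
  | (q, []), Sym.ret a => (M.retStep q M.bot a, [])
  | (q, s :: θ), Sym.ret a => (M.retStep q s a, θ)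

/-- The configuration reached by running `M` on `w` from configuration `c`. -/
def run (M : VPA A Q Γ) (c : Q × List Γ) (w : List (Sym A)) : Q × List Γ :=
  w.foldl M.step c

/-- `M` accepts `w` if the run from the initial configuration `(q_init, ⊥)`
ends in a final state. -/
def Accepts (M : VPA A Q Γ) (w : List (Sym A)) : Prop :=
  (M.run (M.qinit, []) w).1 ∈ M.final

end VPA

/-- A universal state space hosting all the compiled automata: distinguished
control states, states of the DFAs of the regular expressions (`dfa`, `dfa2`),
augmented copies (`aug`), and states of recursively compiled sub-automata
(`sub i s` is state `s` of the `i`-th sub-automaton). -/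
inductive St (σ : Type) : Type
  | beg | fin | sat | rej | exist
  | dfa (q : σ)
  | dfa2 (q : σ)
  | aug (q : σ)
  | sub (i : ℕ) (s : St σ)
  deriving DecidableEq

/-- The VPA `M(callseq reg)` compiled from the linear sequence policy
`callseq reg`, given a DFA `d` for `reg`: it simulates `d` on call symbols
(pushing the current state), ignores return symbols (keeping the current
state), and accepts, on the matched return of the first symbol (recognized by
the stack symbol `q_beg`), iff the DFA is in an accepting state; all missing
transitions are sent to the sink reject state. -/
noncomputable def compileLin {A σ : Type} (d : DFA A σ) :
    VPA A (St σ) (Option (St σ)) where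
  qinit := .beg
  final := {St.fin}
  bot := none
  callStep := fun q s =>
    match q with
    | .beg => (.dfa (d.step d.start s), some .beg)
    | .dfa q₁ => (.dfa (d.step q₁ s), some (.dfa q₁))
    | _ => (.rej, some .rej)
  retStep := fun q γ _s =>
    match q, γ with
    | .dfa q₁, some .beg => if q₁ ∈ d.accept then .fin else .rej
    | .dfa q₁, some (.dfa _) => .dfa q₁
    | _, _ => .rej

lemma callsOf_append {A : Type} (u v : List (Sym A)) :
    callsOf (u ++ v) = callsOf u ++ callsOf v := by
  induction u with
  | nil => rfl
  | cons x t ih => cases x <;> simp [callsOf, ih]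

lemma run_append {A Q Γ : Type} (M : VPA A Q Γ) (c : Q × List Γ)
    (u v : List (Sym A)) : M.run c (u ++ v) = M.run (M.run c u) v := by
  simp [VPA.run, List.foldl_append]

lemma evalFrom_append {A σ : Type} (d : DFA A σ) (q : σ) (u v : List A) :
    d.evalFrom q (u ++ v) = d.evalFrom (d.evalFrom q u) v := by
  simp [DFA.evalFrom, List.foldl_append]

lemma main_lemma {A σ : Type} (d : DFA A σ) :
    ∀ {w : List (Sym A)}, WellMatched w →
      ∀ (q : σ) (θ : List (Option (St σ))) (i : ℕ), i ≤ w.length →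
        ∃ η : List (Option (St σ)),
          (compileLin d).run (.dfa q, θ) (w.take i)
              = (.dfa (d.evalFrom q (callsOf (w.take i))), η ++ θ) ∧
          (i = w.length → η = []) := by
  intro w hw
  induction hw with
  | nil =>
    intro q θ i hi
    have : i = 0 := by simpa using hi
    subst this
    exact ⟨[], rfl, fun _ => rfl⟩
  | @wrap w a b hw ih =>
    intro q θ i hi
    match i, hi with
    | 0, _ =>
      refine ⟨[], rfl, fun h => ?_⟩
      simp [List.length_append] at h
    | (j+1), hi =>
      simp only [List.length_cons, List.length_append, List.length_singleton, List.length_nil] at hi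
      have hj : j ≤ w.length + 1 := by omega
      have hstep : (compileLin d).run (.dfa q, θ)
          ((Sym.call a :: (w ++ [Sym.ret b])).take (j+1))
          = (compileLin d).run (.dfa (d.step q a), some (.dfa q) :: θ)
              ((w ++ [Sym.ret b]).take j) := by
        simp [VPA.run, VPA.step, compileLin]
      rcases Nat.lt_or_ge j (w.length + 1) with hlt | hge
      · -- j ≤ w.length
        have hjw : j ≤ w.length := by omega
        have htake : (w ++ [Sym.ret b]).take j = w.take j :=
          List.take_append_of_le_length hjw
        obtain ⟨η, hrun, _⟩ := ih (d.step q a) (some (.dfa q) :: θ) j hjw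
        refine ⟨η ++ [some (.dfa q)], ?_, ?_⟩
        · rw [hstep, htake, hrun]
          simp [callsOf, DFA.evalFrom, htake]
        · intro h
          simp [List.length_append] at h
          omega
      · -- j = w.length + 1 : full word
        have hj' : j = w.length + 1 := by omega
        subst hj'
        have htake : (w ++ [Sym.ret b]).take (w.length + 1) = w ++ [Sym.ret b] := by
          apply List.take_of_length_le; simp
        obtain ⟨η, hrun, hfull⟩ := ih (d.step q a) (some (.dfa q) :: θ) w.length le_rfl
        have hη : η = [] := hfull rfl
        subst hη
        rw [List.take_length] at hrun
        refine ⟨[], ?_, fun _ => rfl⟩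
        rw [hstep, htake, run_append, hrun]
        simp [VPA.run, VPA.step, compileLin, callsOf, callsOf_append, DFA.evalFrom, htake]
  | @append w₁ w₂ hw₁ hw₂ ih₁ ih₂ =>
    intro q θ i hi
    rcases Nat.lt_or_ge i w₁.length with hlt | hge
    · have htake : (w₁ ++ w₂).take i = w₁.take i :=
        List.take_append_of_le_length hlt.le
      obtain ⟨η, hrun, _⟩ := ih₁ q θ i hlt.le
      refine ⟨η, by rw [htake, hrun], fun h => ?_⟩
      simp [List.length_append] at h; omega
    · have htake : (w₁ ++ w₂).take i = w₁ ++ w₂.take (i - w₁.length) := by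
        rw [List.take_append]
        congr 1
        exact List.take_of_length_le hge
      obtain ⟨η₁, hrun₁, hfull₁⟩ := ih₁ q θ w₁.length le_rfl
      have hη₁ : η₁ = [] := hfull₁ rfl
      subst hη₁
      rw [List.take_length] at hrun₁
      simp only [List.nil_append] at hrun₁
      have hi2 : i - w₁.length ≤ w₂.length := by
        simp [List.length_append] at hi; omega
      obtain ⟨η₂, hrun₂, hfull₂⟩ := ih₂ (d.evalFrom q (callsOf w₁)) θ
        (i - w₁.length) hi2
      refine ⟨η₂, ?_, fun h => ?_⟩
      · rw [htake, run_append, hrun₁, hrun₂]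
        simp [callsOf_append, evalFrom_append]
      · apply hfull₂
        simp [List.length_append] at h; omega

/-- Along the run of the compiled VPA `M(callseq reg)` on a
rooted well-matched nested word `n = a₁…a_l` (from the initial configuration
`(q_beg, ⊥)`), for every `1 ≤ i ≤ l - 1` the state `q_i` reached after reading
the first `i` symbols equals (the embedding of) the state reached by the DFA
`d` of `reg`, started in its initial state, after reading the base symbols of
the call positions among `a₁, …, a_i` in order. -/
theorem stmt3 {A σ : Type} [Fintype A] [Fintype σ]
    (reg : RegularExpression A) (d : DFA A σ)
    (hd : d.accepts = reg.matches')
    (n : List (Sym A)) (hn : Rooted n) :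
    ∀ i : ℕ, 1 ≤ i → i ≤ n.length - 1 →
      ((compileLin d).run ((compileLin d).qinit, []) (n.take i)).1
        = St.dfa (d.eval (callsOf (n.take i))) := by
  obtain ⟨a, b, w, hw, rfl⟩ := hn
  intro i h1 h2
  simp only [List.length_cons, List.length_append, List.length_singleton, List.length_nil] at h2
  match i, h1 with
  | (j+1), _ =>
    have hjw : j ≤ w.length := by omega
    have htake : (w ++ [Sym.ret b]).take j = w.take j :=
      List.take_append_of_le_length hjw
    have hstep : (compileLin d).run ((compileLin d).qinit, [])
        ((Sym.call a :: (w ++ [Sym.ret b])).take (j+1))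
        = (compileLin d).run (.dfa (d.step d.start a), [some .beg])
            ((w ++ [Sym.ret b]).take j) := by
      simp [VPA.run, VPA.step, compileLin]
    obtain ⟨η, hrun, _⟩ := main_lemma d hw (d.step d.start a) [some .beg] j hjw
    rw [hstep, htake, hrun]
    simp [callsOf, DFA.eval, DFA.evalFrom, htake]

end SafeTree
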